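/- arXiv:2002.09116 — 2 statements merged into one kernel-verified Lean document; each statement's English description precedes it below -/
import Mathlib

section
/- Under the uniform boundedness and parameter-Lipschitz assumptions, for any fixed points X_1,…,X_n, Y_1,…,Y_n and any ω, ω' ∈ Ω: | σ̂_ω² − σ̂_{ω'}² | ≤ 256·L_k·ν·‖ω − ω'‖. Moreover, the population quantities satisfy | σ_ω² − σ_{ω'}² | ≤ 256·L_k·ν·‖ω − ω'‖. -/
open MeasureTheory Finset

noncomputable section

/-- `H_{ij} = k(X_i,X_j) + k(Y_i,Y_j) - k(X_i,Y_j) - k(X_j,Y_i)` for the sample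
`sp = (X, Y)`. -/
def Hmat {𝓧 : Type*} {n : ℕ} (k : 𝓧 → 𝓧 → ℝ) (sp : (Fin n → 𝓧) × (Fin n → 𝓧))
    (i j : Fin n) : ℝ :=
  k (sp.1 i) (sp.1 j) + k (sp.2 i) (sp.2 j) - k (sp.1 i) (sp.2 j) - k (sp.1 j) (sp.2 i)

/-- The U-statistic MMD estimator `η̂ = (1/(n(n-1))) ∑_{i≠j} H_{ij}`. -/
def etaHat {𝓧 : Type*} {n : ℕ} (k : 𝓧 → 𝓧 → ℝ) (sp : (Fin n → 𝓧) × (Fin n → 𝓧)) : ℝ :=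
  (1 / ((n : ℝ) * ((n : ℝ) - 1))) * ∑ i : Fin n, ∑ j ∈ univ.erase i, Hmat k sp i j

/-- The variance estimator
`σ̂² = 4 ( (1/n³) ∑_i (∑_j H_{ij})² - (1/n⁴) (∑_{ij} H_{ij})² )`. -/
def sigmaHatSq {𝓧 : Type*} {n : ℕ} (k : 𝓧 → 𝓧 → ℝ) (sp : (Fin n → 𝓧) × (Fin n → 𝓧)) : ℝ :=
  4 * ((1 / (n : ℝ) ^ 3) * ∑ i : Fin n, (∑ j : Fin n, Hmat k sp i j) ^ 2
     - (1 / (n : ℝ) ^ 4) * (∑ i : Fin n, ∑ j : Fin n, Hmat k sp i j) ^ 2)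

/-- `h((x,y),(x',y')) = k(x,x') + k(y,y') - k(x,y') - k(x',y)`, so that
`H_{ij} = h((X_i,Y_i),(X_j,Y_j))`. -/
def hPair {𝓧 : Type*} (k : 𝓧 → 𝓧 → ℝ) (u v : 𝓧 × 𝓧) : ℝ :=
  k u.1 v.1 + k u.2 v.2 - k u.1 v.2 - k v.1 u.2

/-- Population value `η = E[H_{12}]` (the squared MMD). -/
def etaPop {𝓧 : Type*} [MeasurableSpace 𝓧] (k : 𝓧 → 𝓧 → ℝ) (P Q : Measure 𝓧) : ℝ :=
  ∫ u, ∫ v, hPair k u v ∂(P.prod Q) ∂(P.prod Q)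

/-- Population second moment `E[H_{12} H_{13}]`. -/
def hCross {𝓧 : Type*} [MeasurableSpace 𝓧] (k : 𝓧 → 𝓧 → ℝ) (P Q : Measure 𝓧) : ℝ :=
  ∫ u, ∫ v, ∫ w, hPair k u v * hPair k u w ∂(P.prod Q) ∂(P.prod Q) ∂(P.prod Q)

/-- The asymptotic variance `σ² = 4 (E[H_{12} H_{13}] - E[H_{12}]²)`. -/
def sigmaSqPop {𝓧 : Type*} [MeasurableSpace 𝓧] (k : 𝓧 → 𝓧 → ℝ) (P Q : Measure 𝓧) : ℝ :=
  4 * (hCross k P Q - (etaPop k P Q) ^ 2)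

/-- The joint law of `n` i.i.d. samples from `P` and `n` i.i.d. samples from `Q`,
all mutually independent. -/
def sampleMeasure {𝓧 : Type*} [MeasurableSpace 𝓧] (P Q : Measure 𝓧) (n : ℕ) :
    Measure ((Fin n → 𝓧) × (Fin n → 𝓧)) :=
  (Measure.pi fun _ => P).prod (Measure.pi fun _ => Q)

/-! Both `σ̂²` and `σ²` have the form `4 Var_μ[u ↦ E_μ h(u, ·)]`: for `σ̂²`, `μ` is the uniform
measure on the indices and `h = H`; for `σ²`, `μ = P ⊗ Q` and `h = hPair`. On functions bounded
by `C` the variance is `4C`-Lipschitz in the sup distance. The conditional mean `u ↦ E h(u, ·)` is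
bounded by `4ν` and moves by at most `4 L_k ‖ω - ω'‖` from `k_ω` to `k_ω'`, which gives
`4 · 4 · 4ν · 4 L_k ‖ω - ω'‖ = 256 L_k ν ‖ω - ω'‖`. -/

open Function ProbabilityTheory

theorem abs_sq_sub_sq_le {a b C d : ℝ} (ha : |a| ≤ C) (hb : |b| ≤ C) (hab : |a - b| ≤ d) :
    |a ^ 2 - b ^ 2| ≤ 2 * C * d := by
  calc |a ^ 2 - b ^ 2| ≤ |a - b| * 2 * max |a| |b| := by simpa using abs_pow_sub_pow_le a b 2
    _ ≤ d * 2 * C := mul_le_mul (by linarith) (max_le ha hb) (by positivity)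
      (by linarith [abs_nonneg (a - b)])
    _ = 2 * C * d := by ring

section Integral

variable {α β : Type*} [MeasurableSpace α] [MeasurableSpace β] {μ : Measure α} {ν : Measure β}

theorem abs_integral_le_of_forall_abs_le [IsProbabilityMeasure μ] {f : α → ℝ} {C : ℝ}
    (hf : ∀ x, |f x| ≤ C) : |∫ x, f x ∂μ| ≤ C := by
  simpa using norm_integral_le_of_norm_le_const (μ := μ)
    (ae_of_all μ fun x => (Real.norm_eq_abs _).trans_le (hf x))

theorem abs_integral_sub_integral_le [IsProbabilityMeasure μ] {f g : α → ℝ} {d : ℝ}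
    (hf : Integrable f μ) (hg : Integrable g μ) (hfg : ∀ x, |f x - g x| ≤ d) :
    |∫ x, f x ∂μ - ∫ x, g x ∂μ| ≤ d := by
  rw [← integral_sub hf hg]
  exact abs_integral_le_of_forall_abs_le hfg

theorem memLp_of_forall_abs_le [IsFiniteMeasure μ] {f : α → ℝ} {C : ℝ}
    (hf : AEStronglyMeasurable f μ) (hfC : ∀ x, |f x| ≤ C) (p : ENNReal) : MemLp f p μ :=
  .of_bound hf C (ae_of_all μ fun x => (Real.norm_eq_abs _).trans_le (hfC x))

theorem aestronglyMeasurable_integral_right [SFinite ν] {h : α → β → ℝ}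
    (hm : Measurable (uncurry h)) : AEStronglyMeasurable (fun u => ∫ v, h u v ∂ν) μ :=
  (hm.stronglyMeasurable.integral_prod_right' (ν := ν)).aestronglyMeasurable

theorem integral_integral_mul_integral_eq_integral_sq (h : α → β → ℝ) :
    ∫ u, ∫ v, ∫ w, h u v * h u w ∂ν ∂ν ∂μ = ∫ u, (∫ v, h u v ∂ν) ^ 2 ∂μ := by
  simp only [integral_const_mul, integral_mul_const, sq]

theorem abs_variance_sub_variance_le [IsProbabilityMeasure μ] {f g : α → ℝ} {C d : ℝ}
    (hf : AEStronglyMeasurable f μ) (hg : AEStronglyMeasurable g μ) (hfC : ∀ x, |f x| ≤ C)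
    (hgC : ∀ x, |g x| ≤ C) (hfg : ∀ x, |f x - g x| ≤ d) :
    |variance f μ - variance g μ| ≤ 4 * C * d := by
  have hf2 := memLp_of_forall_abs_le hf hfC 2
  have hg2 := memLp_of_forall_abs_le hg hgC 2
  have h_second : |μ[f ^ 2] - μ[g ^ 2]| ≤ 2 * C * d :=
    abs_integral_sub_integral_le hf2.integrable_sq hg2.integrable_sq
      fun x => abs_sq_sub_sq_le (hfC x) (hgC x) (hfg x)
  have h_first : |μ[f] ^ 2 - μ[g] ^ 2| ≤ 2 * C * d :=
    abs_sq_sub_sq_le (abs_integral_le_of_forall_abs_le hfC) (abs_integral_le_of_forall_abs_le hgC)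
      (abs_integral_sub_integral_le (hf2.integrable one_le_two) (hg2.integrable one_le_two) hfg)
  rw [variance_eq_sub hf2, variance_eq_sub hg2]
  calc _ = |(μ[f ^ 2] - μ[g ^ 2]) - (μ[f] ^ 2 - μ[g] ^ 2)| := by ring_nf
    _ ≤ |μ[f ^ 2] - μ[g ^ 2]| + |μ[f] ^ 2 - μ[g] ^ 2| := abs_sub _ _
    _ ≤ 4 * C * d := by linarith

theorem abs_variance_integral_sub_variance_integral_le [IsProbabilityMeasure μ]
    [IsProbabilityMeasure ν] {h h' : α → β → ℝ} {C d : ℝ} (hm : Measurable (uncurry h))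
    (hm' : Measurable (uncurry h')) (hC : ∀ u v, |h u v| ≤ C) (hC' : ∀ u v, |h' u v| ≤ C)
    (hd : ∀ u v, |h u v - h' u v| ≤ d) :
    |variance (fun u => ∫ v, h u v ∂ν) μ - variance (fun u => ∫ v, h' u v ∂ν) μ| ≤ 4 * C * d := by
  have hint : ∀ {h : α → β → ℝ}, Measurable (uncurry h) → (∀ u v, |h u v| ≤ C) →
      ∀ u, Integrable (h u) ν := fun hm hC u => memLp_one_iff_integrable.mp <|
    memLp_of_forall_abs_le (hm.comp measurable_prodMk_left).aestronglyMeasurable (hC u) 1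
  exact abs_variance_sub_variance_le (aestronglyMeasurable_integral_right hm)
    (aestronglyMeasurable_integral_right hm')
    (fun u => abs_integral_le_of_forall_abs_le (hC u))
    (fun u => abs_integral_le_of_forall_abs_le (hC' u))
    (fun u => abs_integral_sub_integral_le (hint hm hC u) (hint hm' hC' u) (hd u))

end Integral

section Kernel

variable {𝓧 : Type*}

theorem Hmat_eq_hPair {n : ℕ} (k : 𝓧 → 𝓧 → ℝ) (sp : (Fin n → 𝓧) × (Fin n → 𝓧)) (i j : Fin n) :
    Hmat k sp i j = hPair k (sp.1 i, sp.2 i) (sp.1 j, sp.2 j) :=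
  rfl

theorem hPair_sub (k k' : 𝓧 → 𝓧 → ℝ) (u v : 𝓧 × 𝓧) :
    hPair (k - k') u v = hPair k u v - hPair k' u v := by
  simp only [hPair, Pi.sub_apply]
  ring

theorem abs_hPair_le {k : 𝓧 → 𝓧 → ℝ} {ν : ℝ} (hk : ∀ x y, |k x y| ≤ ν) (u v : 𝓧 × 𝓧) :
    |hPair k u v| ≤ 4 * ν := by
  unfold hPair
  have := abs_sub (k u.1 v.1 + k u.2 v.2 - k u.1 v.2) (k v.1 u.2)
  have := abs_sub (k u.1 v.1 + k u.2 v.2) (k u.1 v.2)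
  have := abs_add_le (k u.1 v.1) (k u.2 v.2)
  linarith [hk u.1 v.1, hk u.2 v.2, hk u.1 v.2, hk v.1 u.2]

theorem abs_hPair_sub_hPair_le {k k' : 𝓧 → 𝓧 → ℝ} {D : ℝ} (hkk' : ∀ x y, |k x y - k' x y| ≤ D)
    (u v : 𝓧 × 𝓧) : |hPair k u v - hPair k' u v| ≤ 4 * D := by
  rw [← hPair_sub]
  exact abs_hPair_le hkk' u v

theorem sigmaHatSq_eq_variance {n : ℕ} [NeZero n] (k : 𝓧 → 𝓧 → ℝ)
    (sp : (Fin n → 𝓧) × (Fin n → 𝓧)) :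
    sigmaHatSq k sp = 4 * variance
      (fun i => ∫ j, Hmat k sp i j ∂(PMF.uniformOfFintype (Fin n)).toMeasure)
      (PMF.uniformOfFintype (Fin n)).toMeasure := by
  rw [variance_eq_sub (μ := (PMF.uniformOfFintype (Fin n)).toMeasure) .of_discrete]
  simp only [PMF.integral_eq_sum, PMF.uniformOfFintype_apply, Fintype.card_fin, ENNReal.toReal_inv,
    ENNReal.toReal_natCast, smul_eq_mul, Pi.pow_apply, mul_pow, ← Finset.mul_sum, sigmaHatSq]
  have hn : (n : ℝ) ≠ 0 := Nat.cast_ne_zero.mpr (NeZero.ne n)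
  field_simp

variable [MeasurableSpace 𝓧]

theorem measurable_uncurry_hPair {k : 𝓧 → 𝓧 → ℝ} (hk : Measurable (uncurry k)) :
    Measurable (uncurry (hPair k)) := by
  unfold hPair
  fun_prop

theorem sigmaSqPop_eq_variance {k : 𝓧 → 𝓧 → ℝ} {ν : ℝ} (hk : Measurable (uncurry k))
    (hkν : ∀ x y, |k x y| ≤ ν) (P Q : Measure 𝓧) [IsProbabilityMeasure P]
    [IsProbabilityMeasure Q] :
    sigmaSqPop k P Q = 4 * variance (fun u => ∫ v, hPair k u v ∂(P.prod Q)) (P.prod Q) := by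
  have hL := memLp_of_forall_abs_le (μ := P.prod Q)
    (aestronglyMeasurable_integral_right (ν := P.prod Q) (measurable_uncurry_hPair hk))
    (fun u => abs_integral_le_of_forall_abs_le (abs_hPair_le hkν u)) 2
  rw [variance_eq_sub hL, sigmaSqPop, hCross, integral_integral_mul_integral_eq_integral_sq, etaPop]
  rfl

end Kernel

theorem sigmaSq_lipschitz_general {𝓧 : Type*} [MeasurableSpace 𝓧]
    {E : Type*} [NormedAddCommGroup E] [NormedSpace ℝ E]
    (Ω : Set E) (k : E → 𝓧 → 𝓧 → ℝ)
    (ν : ℝ) (hbdd : ∀ ω ∈ Ω, ∀ x y, |k ω x y| ≤ ν)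
    (Lk : ℝ) (hLip : ∀ ω ∈ Ω, ∀ ω' ∈ Ω, ∀ x y, |k ω x y - k ω' x y| ≤ Lk * ‖ω - ω'‖)
    (hmeas : ∀ ω ∈ Ω, Measurable fun p : 𝓧 × 𝓧 => k ω p.1 p.2)
    (P Q : Measure 𝓧) [IsProbabilityMeasure P] [IsProbabilityMeasure Q]
    (ω : E) (hω : ω ∈ Ω) (ω' : E) (hω' : ω' ∈ Ω) :
    (∀ (n : ℕ) (sp : (Fin n → 𝓧) × (Fin n → 𝓧)),
        |sigmaHatSq (k ω) sp - sigmaHatSq (k ω') sp| ≤ 256 * Lk * ν * ‖ω - ω'‖) ∧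
    |sigmaSqPop (k ω) P Q - sigmaSqPop (k ω') P Q| ≤ 256 * Lk * ν * ‖ω - ω'‖ := by
  have hbound : ∀ ω ∈ Ω, ∀ u v, |hPair (k ω) u v| ≤ 4 * ν := fun ω hω => abs_hPair_le (hbdd ω hω)
  have hdiff : ∀ u v, |hPair (k ω) u v - hPair (k ω') u v| ≤ 4 * (Lk * ‖ω - ω'‖) :=
    abs_hPair_sub_hPair_le (hLip ω hω ω' hω')
  have hscale : ∀ a b : ℝ, |a - b| ≤ 4 * (4 * ν) * (4 * (Lk * ‖ω - ω'‖)) →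
      |4 * a - 4 * b| ≤ 256 * Lk * ν * ‖ω - ω'‖ := fun a b hab => by
    rw [← mul_sub, abs_mul, abs_of_pos four_pos]
    linarith
  have hpop : |sigmaSqPop (k ω) P Q - sigmaSqPop (k ω') P Q| ≤ 256 * Lk * ν * ‖ω - ω'‖ := by
    rw [sigmaSqPop_eq_variance (hmeas ω hω) (hbdd ω hω),
      sigmaSqPop_eq_variance (hmeas ω' hω') (hbdd ω' hω')]
    exact hscale _ _ <| abs_variance_integral_sub_variance_integral_le
      (measurable_uncurry_hPair (hmeas ω hω)) (measurable_uncurry_hPair (hmeas ω' hω'))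
      (hbound ω hω) (hbound ω' hω') hdiff
  refine ⟨fun n sp => ?_, hpop⟩
  rcases n.eq_zero_or_pos with rfl | hn
  · -- `σ̂² = 0` for the empty sample, and `hpop` shows that the bound is nonnegative
    simpa [sigmaHatSq] using (abs_nonneg _).trans hpop
  · have : NeZero n := ⟨hn.ne'⟩
    rw [sigmaHatSq_eq_variance, sigmaHatSq_eq_variance]
    simp only [Hmat_eq_hPair]
    exact hscale _ _ <| abs_variance_integral_sub_variance_integral_le .of_discrete .of_discrete
      (fun i j => hbound ω hω _ _) (fun i j => hbound ω' hω' _ _) (fun i j => hdiff _ _)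

/-- Lipschitzness of the variance estimator and of the asymptotic variance in the
kernel parameter: `|σ̂_ω² - σ̂_{ω'}²| ≤ 256 L_k ν ‖ω - ω'‖` and likewise for the
population quantity. -/
theorem sigmaSq_lipschitz {𝓧 : Type*} [MeasurableSpace 𝓧]
    {E : Type*} [NormedAddCommGroup E] [NormedSpace ℝ E]
    (Ω : Set E) (k : E → 𝓧 → 𝓧 → ℝ)
    (hsymm : ∀ ω ∈ Ω, ∀ x y, k ω x y = k ω y x)
    (ν : ℝ) (hbdd : ∀ ω ∈ Ω, ∀ x y, |k ω x y| ≤ ν)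
    (Lk : ℝ) (hLip : ∀ ω ∈ Ω, ∀ ω' ∈ Ω, ∀ x y, |k ω x y - k ω' x y| ≤ Lk * ‖ω - ω'‖)
    (hmeas : ∀ ω ∈ Ω, Measurable fun p : 𝓧 × 𝓧 => k ω p.1 p.2)
    (P Q : Measure 𝓧) [IsProbabilityMeasure P] [IsProbabilityMeasure Q]
    (ω : E) (hω : ω ∈ Ω) (ω' : E) (hω' : ω' ∈ Ω) :
    (∀ (n : ℕ) (sp : (Fin n → 𝓧) × (Fin n → 𝓧)),
        |sigmaHatSq (k ω) sp - sigmaHatSq (k ω') sp| ≤ 256 * Lk * ν * ‖ω - ω'‖) ∧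
    |sigmaSqPop (k ω) P Q - sigmaSqPop (k ω') P Q| ≤ 256 * Lk * ν * ‖ω - ω'‖ :=
  sigmaSq_lipschitz_general Ω k ν hbdd Lk hLip hmeas P Q ω hω ω' hω'
end
end

section
/- Let k be a fixed symmetric kernel with |k(x,y)| ≤ ν for all x, y, and let (X_1,Y_1),…,(X_n,Y_n) be points. Let σ̂² be the variance estimator computed from these points, and let (σ̂')² be the estimator computed after replacing the single pair (X_1,Y_1) by another pair (X_1',Y_1') (all other points unchanged). Then | σ̂² − (σ̂')² | ≤ (64·ν²/n³)·(14n² − 11n + 3) ≤ 896·ν²/n. (The same bound holds when any single pair (X_i,Y_i) is replaced.) -/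
open MeasureTheory Finset

noncomputable section

/-!
Replacing the pair `(X_i, Y_i)` changes the array `H` only in row and column `i`, and its entries
are bounded by `c = 4ν`. So a row sum `R_j` with `j ≠ i` moves by at most `2c`, the row sum `R_i`
by at most `2Nc`, and the total sum by at most `(2N - 1)·2c`. Since `|a² - b²| ≤ 2M|a - b|` for
`|a|, |b| ≤ M`, the change of `Σ R_j²` is at most `c²(5N² - 4N)` and that of `(Σ R_j)²` at most
`4c²N²(2N - 1)`, so `σ̂²` moves by at most `4c²(13N² - 8N)/N³`, which is below the stated bound.
-/

lemma abs_sum_le_card_mul {α : Type*} (s : Finset α) {f : α → ℝ} {c : ℝ}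
    (h : ∀ x ∈ s, |f x| ≤ c) : |∑ x ∈ s, f x| ≤ #s * c :=
  (abs_sum_le_sum_abs _ _).trans ((sum_le_card_nsmul _ _ _ h).trans_eq (nsmul_eq_mul _ _))

lemma abs_sub_le_two_mul {a b c : ℝ} (ha : |a| ≤ c) (hb : |b| ≤ c) : |a - b| ≤ 2 * c := by
  linarith [abs_sub a b]

lemma abs_sq_sub_sq_le_mul {a b M : ℝ} (ha : |a| ≤ M) (hb : |b| ≤ M) :
    |a ^ 2 - b ^ 2| ≤ 2 * M * |a - b| := by
  rw [sq_sub_sq, abs_mul]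
  exact mul_le_mul_of_nonneg_right (by linarith [abs_add_le a b]) (abs_nonneg _)

lemma abs_sq_sub_sq_le_sq {a b M : ℝ} (ha : |a| ≤ M) (hb : |b| ≤ M) :
    |a ^ 2 - b ^ 2| ≤ M ^ 2 := by
  have ha2 := sq_le_sq' (abs_le.mp ha).1 (abs_le.mp ha).2
  have hb2 := sq_le_sq' (abs_le.mp hb).1 (abs_le.mp hb).2
  rw [abs_le]
  constructor <;> nlinarith [sq_nonneg a, sq_nonneg b]

def varianceForm {ι : Type*} [Fintype ι] (H : ι → ι → ℝ) : ℝ :=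
  4 * ((1 / (Fintype.card ι : ℝ) ^ 3) * ∑ j, (∑ l, H j l) ^ 2
     - (1 / (Fintype.card ι : ℝ) ^ 4) * (∑ j, ∑ l, H j l) ^ 2)

section ArrayPerturbation

variable {ι : Type*} [Fintype ι] {H H' : ι → ι → ℝ} {c : ℝ}

local notation "N" => (Fintype.card ι : ℝ)

lemma abs_rowSum_le (hH : ∀ j l, |H j l| ≤ c) (j : ι) : |∑ l, H j l| ≤ N * c := by
  simpa using abs_sum_le_card_mul univ fun l _ => hH j l

lemma abs_totalSum_le (hH : ∀ j l, |H j l| ≤ c) : |∑ j, ∑ l, H j l| ≤ N * (N * c) := by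
  simpa using abs_sum_le_card_mul univ fun j _ => abs_rowSum_le hH j

variable {i : ι}

lemma rowSum_sub_rowSum_of_ne (hoff : ∀ j l, j ≠ i → l ≠ i → H' j l = H j l) {j : ι}
    (hj : j ≠ i) : ∑ l, H j l - ∑ l, H' j l = H j i - H' j i := by
  rw [← sum_sub_distrib]
  refine sum_eq_single_of_mem i (mem_univ i) fun l _ hl => ?_
  rw [hoff j l hj hl, sub_self]

variable [DecidableEq ι]

lemma cast_card_univ_erase (i : ι) : ((#(univ.erase i) : ℕ) : ℝ) = N - 1 := by
  rw [card_erase_of_mem (mem_univ i), card_univ, Nat.cast_pred (Fintype.card_pos_iff.mpr ⟨i⟩)]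

lemma abs_sum_sq_rowSum_sub_le (hH : ∀ j l, |H j l| ≤ c) (hH' : ∀ j l, |H' j l| ≤ c)
    (hoff : ∀ j l, j ≠ i → l ≠ i → H' j l = H j l) :
    |∑ j, (∑ l, H j l) ^ 2 - ∑ j, (∑ l, H' j l) ^ 2| ≤ c ^ 2 * (5 * N ^ 2 - 4 * N) := by
  have hc : 0 ≤ c := (abs_nonneg _).trans (hH i i)
  have hrow : ∀ j ∈ univ.erase i,
      |(∑ l, H j l) ^ 2 - (∑ l, H' j l) ^ 2| ≤ 2 * (N * c) * (2 * c) := by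
    intro j hj
    refine (abs_sq_sub_sq_le_mul (abs_rowSum_le hH j) (abs_rowSum_le hH' j)).trans ?_
    rw [rowSum_sub_rowSum_of_ne hoff (ne_of_mem_erase hj)]
    gcongr
    exact abs_sub_le_two_mul (hH j i) (hH' j i)
  rw [← sum_sub_distrib, ← sum_erase_add _ _ (mem_univ i)]
  calc _ ≤ |∑ j ∈ univ.erase i, ((∑ l, H j l) ^ 2 - (∑ l, H' j l) ^ 2)|
          + |(∑ l, H i l) ^ 2 - (∑ l, H' i l) ^ 2| := abs_add_le _ _
    _ ≤ (N - 1) * (2 * (N * c) * (2 * c)) + (N * c) ^ 2 := by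
        gcongr
        · exact (abs_sum_le_card_mul _ hrow).trans_eq (by rw [cast_card_univ_erase])
        · exact abs_sq_sub_sq_le_sq (abs_rowSum_le hH i) (abs_rowSum_le hH' i)
    _ = c ^ 2 * (5 * N ^ 2 - 4 * N) := by ring

lemma abs_totalSum_sub_le (hH : ∀ j l, |H j l| ≤ c) (hH' : ∀ j l, |H' j l| ≤ c)
    (hoff : ∀ j l, j ≠ i → l ≠ i → H' j l = H j l) :
    |∑ j, ∑ l, H j l - ∑ j, ∑ l, H' j l| ≤ (2 * N - 1) * (2 * c) := by
  have hrow : ∀ j ∈ univ.erase i, |∑ l, H j l - ∑ l, H' j l| ≤ 2 * c := fun j hj => by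
    rw [rowSum_sub_rowSum_of_ne hoff (ne_of_mem_erase hj)]
    exact abs_sub_le_two_mul (hH j i) (hH' j i)
  rw [← sum_sub_distrib, ← sum_erase_add _ _ (mem_univ i)]
  calc _ ≤ |∑ j ∈ univ.erase i, (∑ l, H j l - ∑ l, H' j l)|
          + |∑ l, H i l - ∑ l, H' i l| := abs_add_le _ _
    _ ≤ (N - 1) * (2 * c) + N * (2 * c) := by
        gcongr
        · exact (abs_sum_le_card_mul _ hrow).trans_eq (by rw [cast_card_univ_erase])
        · rw [← sum_sub_distrib]
          simpa using abs_sum_le_card_mul univ fun l _ => abs_sub_le_two_mul (hH i l) (hH' i l)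
    _ = (2 * N - 1) * (2 * c) := by ring

lemma abs_varianceForm_sub_le (hH : ∀ j l, |H j l| ≤ c) (hH' : ∀ j l, |H' j l| ≤ c)
    (hoff : ∀ j l, j ≠ i → l ≠ i → H' j l = H j l) :
    |varianceForm H - varianceForm H'| ≤ 4 * c ^ 2 / N ^ 3 * (13 * N ^ 2 - 8 * N) := by
  have hN : 0 < N := Nat.cast_pos.mpr (Fintype.card_pos_iff.mpr ⟨i⟩)
  have hA := abs_sum_sq_rowSum_sub_le hH hH' hoff
  have hB := (abs_sq_sub_sq_le_mul (abs_totalSum_le hH) (abs_totalSum_le hH')).trans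
    (mul_le_mul_of_nonneg_left (abs_totalSum_sub_le hH hH' hoff)
      (by linarith [abs_totalSum_le hH, abs_nonneg (∑ j, ∑ l, H j l)]))
  unfold varianceForm
  set A := ∑ j, (∑ l, H j l) ^ 2
  set A' := ∑ j, (∑ l, H' j l) ^ 2
  set B := ∑ j, ∑ l, H j l
  set B' := ∑ j, ∑ l, H' j l
  calc _ = |4 / N ^ 3 * (A - A') - 4 / N ^ 4 * (B ^ 2 - B' ^ 2)| := by congr 1; ring
    _ ≤ 4 / N ^ 3 * |A - A'| + 4 / N ^ 4 * |B ^ 2 - B' ^ 2| := by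
        refine (abs_sub _ _).trans_eq ?_
        rw [abs_mul, abs_mul, abs_of_pos (by positivity : (0 : ℝ) < 4 / N ^ 3),
          abs_of_pos (by positivity : (0 : ℝ) < 4 / N ^ 4)]
    _ ≤ 4 / N ^ 3 * (c ^ 2 * (5 * N ^ 2 - 4 * N))
          + 4 / N ^ 4 * (2 * (N * (N * c)) * ((2 * N - 1) * (2 * c))) := by gcongr
    _ = 4 * c ^ 2 / N ^ 3 * (13 * N ^ 2 - 8 * N) := by field_simp; ring

end ArrayPerturbation

lemma abs_Hmat_le {𝓧 : Type*} {n : ℕ} {k : 𝓧 → 𝓧 → ℝ} {ν : ℝ} (hbdd : ∀ x y, |k x y| ≤ ν)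
    (sp : (Fin n → 𝓧) × (Fin n → 𝓧)) (j l : Fin n) : |Hmat k sp j l| ≤ 4 * ν := by
  obtain ⟨h₁, h₁'⟩ := abs_le.mp (hbdd (sp.1 j) (sp.1 l))
  obtain ⟨h₂, h₂'⟩ := abs_le.mp (hbdd (sp.2 j) (sp.2 l))
  obtain ⟨h₃, h₃'⟩ := abs_le.mp (hbdd (sp.1 j) (sp.2 l))
  obtain ⟨h₄, h₄'⟩ := abs_le.mp (hbdd (sp.1 l) (sp.2 j))
  rw [Hmat, abs_le]
  constructor <;> linarith

lemma Hmat_update_of_ne {𝓧 : Type*} {n : ℕ} (k : 𝓧 → 𝓧 → ℝ) (X Y : Fin n → 𝓧) (i : Fin n)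
    (x' y' : 𝓧) {j l : Fin n} (hj : j ≠ i) (hl : l ≠ i) :
    Hmat k (Function.update X i x', Function.update Y i y') j l = Hmat k (X, Y) j l := by
  simp only [Hmat, Function.update_of_ne hj, Function.update_of_ne hl]

lemma sigmaHatSq_eq_varianceForm {𝓧 : Type*} {n : ℕ} (k : 𝓧 → 𝓧 → ℝ)
    (sp : (Fin n → 𝓧) × (Fin n → 𝓧)) : sigmaHatSq k sp = varianceForm (Hmat k sp) := by
  rw [sigmaHatSq, varianceForm, Fintype.card_fin]

theorem sigmaHatSq_bounded_differences_general {𝓧 : Type*}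
    (k : 𝓧 → 𝓧 → ℝ)
    (ν : ℝ) (hbdd : ∀ x y, |k x y| ≤ ν)
    (n : ℕ) (X Y : Fin n → 𝓧) (i : Fin n) (x' y' : 𝓧) :
    |sigmaHatSq k (X, Y) - sigmaHatSq k (Function.update X i x', Function.update Y i y')| ≤
        (64 * ν ^ 2 / (n : ℝ) ^ 3) * (14 * (n : ℝ) ^ 2 - 11 * (n : ℝ) + 3) ∧
    (64 * ν ^ 2 / (n : ℝ) ^ 3) * (14 * (n : ℝ) ^ 2 - 11 * (n : ℝ) + 3) ≤
        896 * ν ^ 2 / (n : ℝ) := by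
  have hn : (1 : ℝ) ≤ n := Nat.one_le_cast.mpr i.pos
  have hdiff := abs_varianceForm_sub_le (abs_Hmat_le hbdd (X, Y)) (abs_Hmat_le hbdd _)
    fun j l hj hl => Hmat_update_of_ne k X Y i x' y' hj hl
  rw [Fintype.card_fin, show 4 * (4 * ν) ^ 2 = 64 * ν ^ 2 by ring] at hdiff
  rw [sigmaHatSq_eq_varianceForm, sigmaHatSq_eq_varianceForm]
  constructor
  · exact hdiff.trans (by gcongr; nlinarith [sq_nonneg ((n : ℝ) - 2)])
  · calc _ ≤ 64 * ν ^ 2 / (n : ℝ) ^ 3 * (14 * (n : ℝ) ^ 2) := by gcongr; linarith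
      _ = 896 * ν ^ 2 / n := by field_simp; ring

/-- Bounded-differences property of the variance estimator `σ̂²`: replacing a single
pair `(X_i, Y_i)` changes it by at most `(64 ν²/n³)(14n² - 11n + 3) ≤ 896 ν²/n`. -/
theorem sigmaHatSq_bounded_differences {𝓧 : Type*}
    (k : 𝓧 → 𝓧 → ℝ) (hsymm : ∀ x y, k x y = k y x)
    (ν : ℝ) (hbdd : ∀ x y, |k x y| ≤ ν)
    (n : ℕ) (hn : 1 ≤ n) (X Y : Fin n → 𝓧) (i : Fin n) (x' y' : 𝓧) :
    |sigmaHatSq k (X, Y) - sigmaHatSq k (Function.update X i x', Function.update Y i y')| ≤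
        (64 * ν ^ 2 / (n : ℝ) ^ 3) * (14 * (n : ℝ) ^ 2 - 11 * (n : ℝ) + 3) ∧
    (64 * ν ^ 2 / (n : ℝ) ^ 3) * (14 * (n : ℝ) ^ 2 - 11 * (n : ℝ) + 3) ≤
        896 * ν ^ 2 / (n : ℝ) :=
  sigmaHatSq_bounded_differences_general k ν hbdd n X Y i x' y'
end
end
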